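/- Let φ(x) = Q_1(x) = sqrt(4/(x²+1)). Then ∫_ℝ [ -(1/2⁶)φ² + (9/2⁷)φ⁴ + (13/2⁶)φ⁶ - (59/2⁸)φ⁸ + (5/2⁶)φ¹⁰ - (9/2¹⁰)φ¹² - (1/2²)(φ')² + (15/2⁴)φ²(φ')² - (5/2²)φ⁴(φ')² + (11/2⁵)φ⁶(φ')² - (1/2²)(φ')⁴ ] dx = 0. -/

import Mathlib

open MeasureTheory Real

noncomputable def phi1 (x : ℝ) : ℝ := Real.sqrt (4 / (x ^ 2 + 1))

/-!
With `w = (1 + x²)⁻¹` one has `φ² = 4w` and `φ'² = 4w²(1 - w)`, so the integrand is a polynomial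
in `w` without constant term, hence integrable. It is the derivative of an explicit rational
function of degree `-1`, which vanishes at `±∞`, so the integral is zero.
-/

open Polynomial Set

theorem HasDerivAt.sq_deriv_sqrt {f : ℝ → ℝ} {f' x : ℝ} (hf : HasDerivAt f f' x)
    (hx : 0 < f x) : _root_.deriv (fun y => √(f y)) x ^ 2 = f' ^ 2 / (4 * f x) := by
  rw [(hf.sqrt hx.ne').deriv, div_pow, mul_pow, sq_sqrt hx.le]
  norm_num

theorem integrable_comp_inv_one_add_sq_mul {g : ℝ → ℝ} (hg : ContinuousOn g (Icc 0 1)) :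
    Integrable fun x : ℝ => g (1 + x ^ 2)⁻¹ * (1 + x ^ 2)⁻¹ := by
  have hmaps : ∀ x : ℝ, (1 + x ^ 2)⁻¹ ∈ Icc (0 : ℝ) 1 := fun x =>
    ⟨by positivity, inv_le_one_of_one_le₀ (by nlinarith [sq_nonneg x])⟩
  obtain ⟨C, hC⟩ := isCompact_Icc.exists_bound_of_continuousOn hg
  refine integrable_inv_one_add_sq.bdd_mul (c := C) ?_ (.of_forall fun x => hC _ (hmaps x))
  exact (hg.comp_continuous (by fun_prop (disch := intro x; positivity)) hmaps).aestronglyMeasurable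

theorem phi1_sq (x : ℝ) : phi1 x ^ 2 = 4 * (1 + x ^ 2)⁻¹ := by
  rw [phi1, sq_sqrt (by positivity)]
  ring

theorem deriv_phi1_sq (x : ℝ) :
    deriv phi1 x ^ 2 = 4 * ((1 + x ^ 2)⁻¹) ^ 2 * (1 - (1 + x ^ 2)⁻¹) := by
  have hu : x ^ 2 + 1 ≠ 0 := by positivity
  have hg : HasDerivAt (fun y => 4 / (y ^ 2 + 1)) _ x :=
    (hasDerivAt_const x (4 : ℝ)).div ((hasDerivAt_pow 2 x).add_const 1) hu
  rw [show phi1 = fun y => √(4 / (y ^ 2 + 1)) from rfl, hg.sq_deriv_sqrt (by positivity)]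
  field_simp
  ring

/-- The density as a polynomial in `s = φ²` and `t = φ'²`. -/
noncomputable def z5Density (s t : ℝ) : ℝ :=
  -(1 / 2 ^ 6) * s + (9 / 2 ^ 7) * s ^ 2 + (13 / 2 ^ 6) * s ^ 3 - (59 / 2 ^ 8) * s ^ 4
    + (5 / 2 ^ 6) * s ^ 5 - (9 / 2 ^ 10) * s ^ 6 - (1 / 2 ^ 2) * t + (15 / 2 ^ 4) * s * t
    - (5 / 2 ^ 2) * s ^ 2 * t + (11 / 2 ^ 5) * s ^ 3 * t - (1 / 2 ^ 2) * t ^ 2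

noncomputable def z5Reduced (w : ℝ) : ℝ :=
  -1 / 16 + w / 8 + 29 * w ^ 2 - 158 * w ^ 3 + 256 * w ^ 4 - 128 * w ^ 5

theorem z5Density_soliton (w : ℝ) :
    z5Density (4 * w) (4 * w ^ 2 * (1 - w)) = z5Reduced w * w := by
  unfold z5Density z5Reduced
  ring

noncomputable def z5PrimitiveNum : ℝ[X] :=
  C (1 / 16) * X ^ 9 + C (1 / 4) * X ^ 7 - C (217 / 40) * X ^ 5 + C (25 / 4) * X ^ 3
    - C (15 / 16) * X

noncomputable def z5PrimitiveDen : ℝ[X] := (1 + X ^ 2) ^ 5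

theorem degree_z5PrimitiveNum_lt : z5PrimitiveNum.degree < z5PrimitiveDen.degree := by
  have hnum : z5PrimitiveNum.degree ≤ 9 := by
    unfold z5PrimitiveNum
    compute_degree
  have hden : z5PrimitiveDen.degree = 10 := by
    unfold z5PrimitiveDen
    compute_degree!
  rw [hden]
  exact hnum.trans_lt (by norm_num)

theorem hasDerivAt_z5Primitive (x : ℝ) :
    HasDerivAt (fun y => z5PrimitiveNum.eval y / z5PrimitiveDen.eval y)
      (z5Reduced (1 + x ^ 2)⁻¹ * (1 + x ^ 2)⁻¹) x := by
  have hden : z5PrimitiveDen.eval x ≠ 0 := by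
    simp only [z5PrimitiveDen, eval_pow, eval_add, eval_one, eval_X]
    positivity
  refine ((z5PrimitiveNum.hasDerivAt x).div (z5PrimitiveDen.hasDerivAt x) hden).congr_deriv ?_
  simp only [z5PrimitiveNum, z5PrimitiveDen, z5Reduced, derivative_sub, derivative_add,
    derivative_mul, derivative_C, derivative_pow, derivative_X, derivative_one, eval_sub, eval_add,
    eval_mul, eval_C, eval_pow, eval_X, eval_one, eval_zero]
  field_simp
  ring

theorem integral_z5Reduced : ∫ x : ℝ, z5Reduced (1 + x ^ 2)⁻¹ * (1 + x ^ 2)⁻¹ = 0 := by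
  have hint := integrable_comp_inv_one_add_sq_mul (g := z5Reduced)
    (by unfold z5Reduced; fun_prop)
  simpa using integral_of_hasDerivAt_of_tendsto hasDerivAt_z5Primitive hint
    (div_tendsto_atBot_zero_of_degree_lt _ _ degree_z5PrimitiveNum_lt)
    (div_tendsto_atTop_zero_of_degree_lt _ _ degree_z5PrimitiveNum_lt)

theorem stmt_17 :
    ∫ x : ℝ,
      (-(1 / 2 ^ 6) * (phi1 x) ^ 2 + (9 / 2 ^ 7) * (phi1 x) ^ 4
        + (13 / 2 ^ 6) * (phi1 x) ^ 6 - (59 / 2 ^ 8) * (phi1 x) ^ 8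
        + (5 / 2 ^ 6) * (phi1 x) ^ 10 - (9 / 2 ^ 10) * (phi1 x) ^ 12
        - (1 / 2 ^ 2) * (deriv phi1 x) ^ 2
        + (15 / 2 ^ 4) * (phi1 x) ^ 2 * (deriv phi1 x) ^ 2
        - (5 / 2 ^ 2) * (phi1 x) ^ 4 * (deriv phi1 x) ^ 2
        + (11 / 2 ^ 5) * (phi1 x) ^ 6 * (deriv phi1 x) ^ 2
        - (1 / 2 ^ 2) * (deriv phi1 x) ^ 4) = 0 := by
  rw [← integral_z5Reduced]
  refine integral_congr_ae (.of_forall fun x => ?_)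
  dsimp only
  rw [← z5Density_soliton, ← phi1_sq, ← deriv_phi1_sq, z5Density]
  ring
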